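/- For each nonempty compact list l with unique factorization l = l_1 ∗̄ l_2 ∗̄ ⋯ ∗̄ l_r into ∗̄-irreducible lists, set B(l) := l_1 ↑̄ l_2 ↑̄ ⋯ ↑̄ l_r ∈ k⟨L⟩, and set B([]) := []. Then: (α) the family (B(l)), indexed by the compact lists l, is a k-basis of the k-submodule of k⟨L⟩ spanned by the compact lists; (β) B(l ∗̄ l') = B(l) ↑̄ B(l') for all compact lists l, l'. -/

import Mathlib

open scoped TensorProduct

/-- A monomial: a nonzero finitely supported multi-index with support contained in `{1,2,…}`. -/
def Mon : Type := {m : ℕ →₀ ℕ // m ≠ 0 ∧ m 0 = 0}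

namespace Mon

/-- Product of monomials: pointwise addition of multi-indices. -/
noncomputable instance : Mul Mon :=
  ⟨fun a b =>
    ⟨a.1 + b.1, by
      constructor
      · intro h
        exact a.2.1 ((add_eq_zero.mp h).1)
      · simp [Finsupp.add_apply, a.2.2, b.2.2]⟩⟩

/-- The total degree (weight) of a monomial. -/
def w (m : Mon) : ℕ := m.1.sum fun _ v => v

/-- The set of variable indices occurring in a list of monomials. -/
def IndAlph (l : List Mon) : Finset ℕ := (l.map fun m => m.1.support).foldr (· ∪ ·) ∅

/-- The maximal variable index occurring in a list of monomials (`0` for the empty list). -/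
def maxInd (l : List Mon) : ℕ := (IndAlph l).sup id

/-- The embedding `i ↦ i + p` of `ℕ` into itself. -/
def addEmb (p : ℕ) : ℕ ↪ ℕ := ⟨fun i => i + p, fun a b h => by simpa using h⟩

/-- The shift `T_p` of a monomial: translate the support by `p`. -/
noncomputable def Tmon (p : ℕ) (m : Mon) : Mon :=
  ⟨m.1.embDomain (addEmb p), by
    refine ⟨fun h => m.2.1 (Finsupp.embDomain_eq_zero.mp h), ?_⟩
    by_cases hp : p = 0
    · subst hp
      have h0 : (Finsupp.embDomain (addEmb 0) m.1) ((addEmb 0) 0) = m.1 0 :=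
        by first
          | exact Finsupp.embDomain_apply_self _ _ _
          | simp [Finsupp.embDomain_apply]
      simpa [addEmb] using h0.trans m.2.2
    · apply Finsupp.embDomain_notin_range
      rintro ⟨i, hi⟩
      simp only [addEmb, Function.Embedding.coeFn_mk] at hi
      have hi' : i + p = 0 := hi
      omega⟩

/-- Shifted concatenation of lists of monomials. -/
noncomputable def sconc (l₁ l₂ : List Mon) : List Mon := l₁ ++ l₂.map (Tmon (maxInd l₁))

/-- A list of monomials is compact when its alphabet has no holes:
`IndAlph l = {1,…,card (IndAlph l)}`. -/
def Compact (l : List Mon) : Prop := IndAlph l = Finset.Icc 1 (IndAlph l).card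

/-- The re-indexing function of a list `l` : on `IndAlph l` it is the unique strictly
increasing bijection onto `{1,…,card (IndAlph l)}` (extended injectively elsewhere). -/
noncomputable def phi (l : List Mon) (i : ℕ) : ℕ :=
  if h : i ∈ IndAlph l then
    (((IndAlph l).orderIsoOfFin rfl).symm ⟨i, h⟩ : Fin (IndAlph l).card) + 1
  else i + (IndAlph l).card + 1

lemma phi_pos (l : List Mon) (i : ℕ) : 1 ≤ phi l i := by
  unfold phi; split_ifs <;> omega

lemma phi_inj (l : List Mon) : Function.Injective (phi l) := by
  intro a b hab
  unfold phi at hab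
  split_ifs at hab with ha hb hb
  · have h1 : (((IndAlph l).orderIsoOfFin rfl).symm ⟨a, ha⟩) =
        (((IndAlph l).orderIsoOfFin rfl).symm ⟨b, hb⟩) := Fin.ext (by omega)
    have h2 := congrArg ((IndAlph l).orderIsoOfFin rfl) h1
    rw [OrderIso.apply_symm_apply, OrderIso.apply_symm_apply] at h2
    exact congrArg Subtype.val h2
  · have := (((IndAlph l).orderIsoOfFin rfl).symm ⟨a, ha⟩).isLt; omega
  · have := (((IndAlph l).orderIsoOfFin rfl).symm ⟨b, hb⟩).isLt; omega
  · omega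

/-- Action of the compacting operator of `l` on a single monomial. -/
noncomputable def cptMon (l : List Mon) (m : Mon) : Mon :=
  ⟨m.1.mapDomain (phi l), by
    constructor
    · intro h
      apply m.2.1
      exact Finsupp.mapDomain_injective (phi_inj l) (by simpa using h)
    · apply Finsupp.mapDomain_notin_range
      rintro ⟨i, hi⟩
      have := phi_pos l i
      omega⟩

/-- The compacting operator on lists of monomials. -/
noncomputable def cpt (l : List Mon) : List Mon := l.map (cptMon l)

/-- `sub l I` is the sublist of `l` consisting of the entries whose (1-based) position
belongs to `I`. -/
def sub (l : List Mon) (I : Finset ℕ) : List Mon :=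
  (List.range l.length).filterMap fun j => if j + 1 ∈ I then l[j]? else none

/-- `∗̄`-irreducible lists: nonempty and with no factorization into two nonempty lists. -/
def SIrred (l : List Mon) : Prop :=
  l ≠ [] ∧ ∀ u v : List Mon, l = sconc u v → u = [] ∨ v = []

end Mon

/-- The free `k`-module on the set of lists of monomials. -/
abbrev FreeL (k : Type*) [CommRing k] : Type _ := (List Mon) →₀ k

/-- Weight of a list: sum of the weights of its entries. -/
def wl {A : Type*} (w : A → ℕ) (l : List A) : ℕ := (l.map w).sum

/-- The twisted law `↑` on basis lists, with crossing parameter `qc` and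
superposition parameter `qs`. -/
noncomputable def tw {A : Type*} [Mul A] (k : Type*) [CommRing k] (qc qs : k) (w : A → ℕ) :
    List A → List A → (List A →₀ k)
  | u, [] => Finsupp.single u 1
  | [], b :: v => Finsupp.single (b :: v) 1
  | a :: u, b :: v =>
      Finsupp.mapDomain (a :: ·) (tw k qc qs w u (b :: v))
        + qc ^ (wl w (a :: u) * w b) • Finsupp.mapDomain (b :: ·) (tw k qc qs w (a :: u) v)
        + (qc ^ (wl w u * w b) * qs ^ (w a * w b)) •
            Finsupp.mapDomain ((a * b) :: ·) (tw k qc qs w u v)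
  termination_by u v => u.length + v.length
  decreasing_by all_goals simp <;> omega

/-- The bilinear extension of the twisted law `↑` to the free module on lists. -/
noncomputable def twL {A : Type*} [Mul A] (k : Type*) [CommRing k] (qc qs : k) (w : A → ℕ) :
    (List A →₀ k) →ₗ[k] (List A →₀ k) →ₗ[k] (List A →₀ k) :=
  Finsupp.lift _ k _ fun u => Finsupp.lift _ k _ fun v => tw k qc qs w u v

/-- The deformed shifted law `↑̄` on basis lists: `u ↑̄ v = u ↑ T_{maxInd u} v`. -/
noncomputable def twbar (k : Type*) [CommRing k] (qc qs : k) (u v : List Mon) : FreeL k :=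
  tw k qc qs Mon.w u (v.map (Mon.Tmon (Mon.maxInd u)))

/-- The bilinear extension of the deformed shifted law `↑̄` to the free module. -/
noncomputable def twbarL (k : Type*) [CommRing k] (qc qs : k) :
    FreeL k →ₗ[k] FreeL k →ₗ[k] FreeL k :=
  Finsupp.lift _ k _ fun u => Finsupp.lift _ k _ fun v => twbar k qc qs u v

/-- The `k`-submodule of `k⟨L⟩` spanned by the compact lists. -/
noncomputable def CompSpan (k : Type*) [CommRing k] : Submodule k (FreeL k) :=
  Submodule.span k {x : FreeL k | ∃ l : List Mon, Mon.Compact l ∧ x = Finsupp.single l 1}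


/-!
Both parts rest on two properties of `↑̄`. It is associative, because `↑` is associative and
commutes with the shifts `T_p`; this gives (β). And `u ↑̄ v = u ↑ T_{maxInd u} v` is `u ∗̄ v`
plus lower terms: every other term has the same multi-index and is obtained by moving letters
of the shifted `v`, which use larger variable indices than those of `u`, to earlier positions
or merging them into letters of `u`, which strictly lowers a position weight. Hence `B l` is
`l` plus lower terms with the same alphabet (so compact again), and a unitriangular family is a
basis of the span of its leading terms, which is (α).
-/

namespace Finsupp

variable {α β γ R : Type*}

theorem bilinear_assoc_of_single [CommSemiring R] (μ : (α →₀ R) →ₗ[R] (α →₀ R) →ₗ[R] (α →₀ R))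
    (h : ∀ a b c, μ (μ (single a 1) (single b 1)) (single c 1)
      = μ (single a 1) (μ (single b 1) (single c 1)))
    (x y z : α →₀ R) : μ (μ x y) z = μ x (μ y z) := by
  have key : μ.compr₂ μ = (LinearMap.llcomp R _ _ _ ∘ₗ μ).compl₂ μ := by
    ext a b c
    simp [h]
  exact LinearMap.congr_fun (LinearMap.congr_fun₂ key x y) z

def HasLeadingTerm [Zero R] [One R] [LT β] (ν : α → β) (x : α →₀ R) (a : α) : Prop :=
  x a = 1 ∧ ∀ b ∈ x.support, b ≠ a → ν b < ν a

lemma HasLeadingTerm.le [Zero R] [One R] [Preorder β] {ν : α → β} {x : α →₀ R} {a b : α}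
    (hx : HasLeadingTerm ν x a) (hb : b ∈ x.support) : ν b ≤ ν a := by
  rcases eq_or_ne b a with rfl | hba
  · exact le_rfl
  · exact (hx.2 b hb hba).le

theorem hasLeadingTerm_sum_smul [Semiring R] [Preorder β] {ν : γ → β} {x : α →₀ R} {a : α}
    (hxa : x a = 1) {F : α → γ →₀ R} {c : γ} (hFa : HasLeadingTerm ν (F a) c)
    (hF : ∀ b ∈ x.support, b ≠ a → ∀ y ∈ (F b).support, ν y < ν c) :
    HasLeadingTerm ν (x.sum fun b r => r • F b) c := by
  classical
  refine ⟨?_, fun y hy hyc => ?_⟩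
  · rw [sum_apply, sum, Finset.sum_eq_single a]
    · rw [smul_apply, hxa, hFa.1, one_smul]
    · intro b hb hba
      have hc : F b c = 0 := notMem_support_iff.mp fun hc => lt_irrefl _ (hF b hb hba c hc)
      rw [smul_apply, hc, smul_zero]
    · intro ha
      rw [notMem_support_iff.mp ha, zero_smul, zero_apply]
  · obtain ⟨b, hb, hyb⟩ := Finset.mem_biUnion.mp (support_sum hy)
    have hyb := support_smul hyb
    rcases eq_or_ne b a with rfl | hba
    · exact hFa.2 y hyb hyc
    · exact hF b hb hba y hyb

theorem linearIndependent_of_hasLeadingTerm [Ring R] [LinearOrder β] {ν : α → β} {ι : Type*}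
    {e : ι → α} (he : Function.Injective e) {b : ι → α →₀ R}
    (hb : ∀ i, HasLeadingTerm ν (b i) (e i)) : LinearIndependent R b := by
  classical
  rw [linearIndependent_iff]
  intro c hc
  by_contra hc0
  obtain ⟨i, hi, hmax⟩ := c.support.exists_max_image (ν ∘ e) (support_nonempty_iff.mpr hc0)
  have hcoeff : (linearCombination R b c) (e i) = c i := by
    rw [linearCombination_apply, sum_apply, sum, Finset.sum_eq_single i]
    · rw [smul_apply, (hb i).1, smul_eq_mul, mul_one]
    · intro j hj hji
      have hji' : b j (e i) = 0 := notMem_support_iff.mp fun hij =>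
        ((hb j).2 _ hij (he.ne hji.symm)).not_ge (hmax j hj)
      rw [smul_apply, hji', smul_zero]
    · exact fun h => absurd hi h
  rw [hc, zero_apply] at hcoeff
  exact mem_support_iff.mp hi hcoeff.symm

theorem span_eq_of_hasLeadingTerm [Ring R] [LinearOrder β] [WellFoundedLT β] {ν : α → β}
    {p : α → Prop} {b : {a // p a} → α →₀ R} (hb : ∀ i, HasLeadingTerm ν (b i) i.1)
    (hsupp : ∀ i, ∀ a ∈ (b i).support, p a) :
    Submodule.span R (Set.range b) = Submodule.span R {x | ∃ a, p a ∧ x = single a 1} := by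
  have hS : Submodule.span R {x | ∃ a, p a ∧ x = single a 1} = supported R R {a | p a} := by
    rw [supported_eq_span_single]
    congr 1
    ext x
    simp [eq_comm]
  rw [hS]
  refine le_antisymm (Submodule.span_le.mpr ?_) ?_
  · rintro _ ⟨i, rfl⟩
    exact (mem_supported R _).mpr (hsupp i)
  · rw [← hS, Submodule.span_le]
    rintro _ ⟨a, ha, rfl⟩
    induction hν : ν a using WellFoundedLT.induction generalizing a with
    | _ v ih =>
      subst hν
      have hdecomp : single a (1 : R) = b ⟨a, ha⟩ - (b ⟨a, ha⟩).erase a := by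
        rw [eq_sub_iff_add_eq, ← (hb ⟨a, ha⟩).1, single_add_erase]
      rw [SetLike.mem_coe, hdecomp, ← sum_single ((b ⟨a, ha⟩).erase a)]
      refine Submodule.sub_mem _ (Submodule.subset_span ⟨_, rfl⟩)
        (Submodule.finsuppSum_mem _ _ _ _ fun a' ha' => ?_)
      have ha'a : a' ≠ a := fun h => by simp [h] at ha'
      have ha'b : a' ∈ (b ⟨a, ha⟩).support := by
        rwa [mem_support_iff, ← erase_ne ha'a]
      rw [← smul_single_one]
      exact Submodule.smul_mem _ _ (ih _ ((hb ⟨a, ha⟩).2 a' ha'b ha'a) a'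
        (hsupp _ a' ha'b) rfl)

end Finsupp

open Finsupp

namespace Mon

lemma val_mul (a b : Mon) : (a * b).1 = a.1 + b.1 := rfl

lemma mul_assoc (a b c : Mon) : a * b * c = a * (b * c) :=
  Subtype.ext (add_assoc a.1 b.1 c.1)

lemma w_eq_degree (m : Mon) : m.w = degree m.1 := rfl

lemma w_mul (a b : Mon) : (a * b).w = a.w + b.w := by
  simp only [w_eq_degree, val_mul, map_add]

@[simp] lemma addEmb_apply (p i : ℕ) : addEmb p i = i + p := rfl

lemma val_Tmon (p : ℕ) (m : Mon) : (Tmon p m).1 = m.1.embDomain (addEmb p) := rfl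

lemma Tmon_zero : Tmon 0 = id :=
  funext fun m => Subtype.ext <| by
    rw [val_Tmon, embDomain_eq_mapDomain, show ⇑(addEmb 0) = id from rfl, mapDomain_id]; rfl

lemma Tmon_Tmon (p q : ℕ) (m : Mon) : Tmon p (Tmon q m) = Tmon (p + q) m := by
  apply Subtype.ext
  simp only [val_Tmon, embDomain_eq_mapDomain, ← mapDomain_comp]
  congr 1
  funext i
  simp only [Function.comp_apply, addEmb_apply]
  omega

lemma Tmon_mul (p : ℕ) (a b : Mon) : Tmon p (a * b) = Tmon p a * Tmon p b :=
  Subtype.ext (embDomain_add _ _ _)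

lemma w_Tmon (p : ℕ) (m : Mon) : (Tmon p m).w = m.w := by
  simp only [w_eq_degree, val_Tmon, embDomain_eq_mapDomain, degree_mapDomain]

noncomputable def totalDeg (l : List Mon) : ℕ →₀ ℕ := (l.map fun m : Mon => m.1).sum

@[simp] lemma totalDeg_nil : totalDeg [] = 0 := rfl

@[simp] lemma totalDeg_cons (m : Mon) (l : List Mon) :
    totalDeg (m :: l) = m.1 + totalDeg l := rfl

@[simp] lemma totalDeg_append (l₁ l₂ : List Mon) :
    totalDeg (l₁ ++ l₂) = totalDeg l₁ + totalDeg l₂ := by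
  rw [totalDeg, List.map_append, List.sum_append]; rfl

lemma totalDeg_map_Tmon (p : ℕ) (l : List Mon) :
    totalDeg (l.map (Tmon p)) = (totalDeg l).embDomain (addEmb p) := by
  induction l with
  | nil => simp
  | cons m l ih => simp [ih, val_Tmon, embDomain_add]

lemma IndAlph_eq_support_totalDeg (l : List Mon) : IndAlph l = (totalDeg l).support := by
  classical
  induction l with
  | nil => rfl
  | cons m l ih =>
    rw [totalDeg_cons, support_add_eq_union, ← ih]
    rfl

lemma maxInd_eq_sup_support (l : List Mon) : maxInd l = (totalDeg l).support.sup id := by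
  rw [maxInd, IndAlph_eq_support_totalDeg]

lemma maxInd_nil : maxInd [] = 0 := rfl

lemma pos_of_mem_support_totalDeg {l : List Mon} {i : ℕ} (hi : i ∈ (totalDeg l).support) :
    0 < i := by
  induction l with
  | nil => simp at hi
  | cons m l ih =>
    classical
    rw [totalDeg_cons, support_add_eq_union, Finset.mem_union] at hi
    refine hi.elim (fun h => Nat.pos_of_ne_zero ?_) ih
    rintro rfl
    exact (mem_support_iff.mp h) m.2.2

@[simp] lemma sconc_nil_left (v : List Mon) : sconc [] v = v := by
  simp [sconc, maxInd_nil, Tmon_zero]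

@[simp] lemma sconc_nil_right (u : List Mon) : sconc u [] = u := by
  simp [sconc]

@[simp] lemma length_sconc (u v : List Mon) : (sconc u v).length = u.length + v.length := by
  simp [sconc]

lemma totalDeg_sconc (u v : List Mon) :
    totalDeg (sconc u v) = totalDeg u + (totalDeg v).embDomain (addEmb (maxInd u)) := by
  rw [sconc, totalDeg_append, totalDeg_map_Tmon]

lemma maxInd_sconc (u v : List Mon) : maxInd (sconc u v) = maxInd u + maxInd v := by
  classical
  rcases Finset.eq_empty_or_nonempty (totalDeg v).support with hv | hv
  · rw [maxInd_eq_sup_support v, hv, maxInd_eq_sup_support, totalDeg_sconc,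
      support_eq_empty.mp hv]
    simp [← maxInd_eq_sup_support]
  · rw [maxInd_eq_sup_support, totalDeg_sconc, support_add_eq_union, support_embDomain,
      Finset.sup_union, Finset.sup_map, ← maxInd_eq_sup_support, maxInd_eq_sup_support v,
      add_comm, Finset.sup_add hv]
    obtain ⟨i, hi⟩ := hv
    exact max_eq_right
      ((Nat.le_add_left _ _).trans (Finset.le_sup (f := fun i => id i + maxInd u) hi))

lemma sconc_assoc (u v z : List Mon) : sconc (sconc u v) z = sconc u (sconc v z) := by
  rw [sconc, maxInd_sconc]
  simp only [sconc, List.map_append, List.map_map, List.append_assoc]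
  congr 3
  funext m
  exact (Tmon_Tmon _ _ m).symm

lemma foldr_sconc_append (fs gs : List (List Mon)) :
    (fs ++ gs).foldr sconc [] = sconc (fs.foldr sconc []) (gs.foldr sconc []) := by
  induction fs with
  | nil => simp
  | cons f fs ih => rw [List.cons_append, List.foldr_cons, ih, List.foldr_cons, sconc_assoc]

theorem exists_sIrred_factorization (l : List Mon) (hl : l ≠ []) :
    ∃ fs : List (List Mon), (∀ x ∈ fs, SIrred x) ∧ fs.foldr sconc [] = l := by
  by_cases hirr : SIrred l
  · exact ⟨[l], by simpa using hirr, by simp⟩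
  · obtain ⟨u, v, huv, hu, hv⟩ : ∃ u v, l = sconc u v ∧ u ≠ [] ∧ v ≠ [] := by
      simpa [SIrred, hl] using hirr
    obtain ⟨fsu, hfsu, hfsu_fold⟩ := exists_sIrred_factorization u hu
    obtain ⟨fsv, hfsv, hfsv_fold⟩ := exists_sIrred_factorization v hv
    refine ⟨fsu ++ fsv, fun x hx => ?_, by rw [foldr_sconc_append, hfsu_fold, hfsv_fold, huv]⟩
    exact (List.mem_append.mp hx).elim (hfsu x) (hfsv x)
termination_by l.length
decreasing_by
  all_goals rw [huv, length_sconc]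
  · have := List.length_pos_of_ne_nil hv; omega
  · have := List.length_pos_of_ne_nil hu; omega

lemma IndAlph_sconc (u v : List Mon) :
    IndAlph (sconc u v) = IndAlph u ∪ (IndAlph v).map (addEmb (maxInd u)) := by
  classical
  simp only [IndAlph_eq_support_totalDeg, totalDeg_sconc, support_add_eq_union,
    support_embDomain]

lemma IndAlph_map_Tmon (p : ℕ) (l : List Mon) :
    IndAlph (l.map (Tmon p)) = (IndAlph l).map (addEmb p) := by
  simp only [IndAlph_eq_support_totalDeg, totalDeg_map_Tmon, support_embDomain]

lemma degree_totalDeg_sconc (u v : List Mon) :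
    degree (totalDeg (sconc u v)) = degree (totalDeg u) + degree (totalDeg v) := by
  rw [totalDeg_sconc, map_add, embDomain_eq_mapDomain, degree_mapDomain]

lemma Compact.of_totalDeg_eq {l z : List Mon} (hl : Compact l) (h : totalDeg z = totalDeg l) :
    Compact z := by
  rw [Compact, IndAlph_eq_support_totalDeg, h, ← IndAlph_eq_support_totalDeg]
  exact hl

lemma compact_iff_exists_Icc {l : List Mon} : Compact l ↔ ∃ n, IndAlph l = Finset.Icc 1 n :=
  ⟨fun h => ⟨_, h⟩, fun ⟨n, hn⟩ => by rw [Compact, hn, Nat.card_Icc, Nat.add_sub_cancel]⟩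

lemma maxInd_of_IndAlph_eq_Icc {l : List Mon} {n : ℕ} (h : IndAlph l = Finset.Icc 1 n) :
    maxInd l = n := by
  rw [maxInd, h]
  refine le_antisymm (Finset.sup_le fun i hi => (Finset.mem_Icc.mp hi).2) ?_
  rcases Nat.eq_zero_or_pos n with rfl | hn
  · exact Nat.zero_le _
  · exact Finset.le_sup (f := id) (Finset.mem_Icc.mpr ⟨hn, le_rfl⟩)

theorem Compact.sconc {l l' : List Mon} (hl : Compact l) (hl' : Compact l') :
    Compact (sconc l l') := by
  obtain ⟨n, hn⟩ := compact_iff_exists_Icc.mp hl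
  obtain ⟨n', hn'⟩ := compact_iff_exists_Icc.mp hl'
  refine compact_iff_exists_Icc.mpr ⟨n + n', ?_⟩
  rw [IndAlph_sconc, hn, hn', maxInd_of_IndAlph_eq_Icc hn]
  ext i
  simp only [Finset.mem_union, Finset.mem_map, Finset.mem_Icc, addEmb_apply]
  constructor
  · rintro (h | ⟨j, hj, rfl⟩) <;> omega
  · intro h
    by_cases hi : i ≤ n
    · exact Or.inl ⟨h.1, hi⟩
    · exact Or.inr ⟨i - n, by omega, by omega⟩

end Mon

section TwistedLaw

variable {A : Type*} [Mul A] {k : Type*} [CommRing k] {qc qs : k} {w : A → ℕ}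

lemma tw_nil_right (u : List A) : tw k qc qs w u [] = single u 1 := by
  cases u <;> rw [tw]

lemma tw_nil_left (v : List A) : tw k qc qs w [] v = single v 1 := by
  cases v <;> rw [tw]

lemma tw_cons_cons (a b : A) (u v : List A) :
    tw k qc qs w (a :: u) (b :: v) =
      mapDomain (a :: ·) (tw k qc qs w u (b :: v))
        + qc ^ (wl w (a :: u) * w b) • mapDomain (b :: ·) (tw k qc qs w (a :: u) v)
        + (qc ^ (wl w u * w b) * qs ^ (w a * w b)) •
            mapDomain ((a * b) :: ·) (tw k qc qs w u v) := by
  rw [tw]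

lemma mem_support_tw_cons_cons {a b : A} {u v z : List A}
    (hz : z ∈ (tw k qc qs w (a :: u) (b :: v)).support) :
    (∃ t ∈ (tw k qc qs w u (b :: v)).support, a :: t = z) ∨
    (∃ t ∈ (tw k qc qs w (a :: u) v).support, b :: t = z) ∨
    (∃ t ∈ (tw k qc qs w u v).support, (a * b) :: t = z) := by
  classical
  rw [tw_cons_cons] at hz
  rcases Finset.mem_union.mp (support_add hz) with hz | hz
  · rcases Finset.mem_union.mp (support_add hz) with hz | hz
    · exact Or.inl (Finset.mem_image.mp (mapDomain_support hz))
    · exact Or.inr (Or.inl (Finset.mem_image.mp (mapDomain_support (support_smul hz))))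
  · exact Or.inr (Or.inr (Finset.mem_image.mp (mapDomain_support (support_smul hz))))

theorem sum_map_of_mem_support_tw {M : Type*} [AddCommMonoid M] (f : A → M)
    (hf : ∀ a b, f (a * b) = f a + f b) {u v z : List A}
    (hz : z ∈ (tw k qc qs w u v).support) :
    (z.map f).sum = (u.map f).sum + (v.map f).sum := by
  induction u, v using tw.induct generalizing z with
  | case1 u =>
    rw [tw_nil_right] at hz
    simp [Finset.mem_singleton.mp (support_single_subset hz)]
  | case2 b v =>
    rw [tw_nil_left] at hz
    simp [Finset.mem_singleton.mp (support_single_subset hz)]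
  | case3 a u b v ih₁ ih₂ ih₃ =>
    rcases mem_support_tw_cons_cons hz with ⟨t, ht, rfl⟩ | ⟨t, ht, rfl⟩ | ⟨t, ht, rfl⟩
    · simp only [List.map_cons, List.sum_cons, ih₁ ht]; abel
    · simp only [List.map_cons, List.sum_cons, ih₂ ht]; abel
    · simp only [List.map_cons, List.sum_cons, ih₃ ht, hf]; abel

theorem mapDomain_map_tw {B : Type*} [Mul B] (w' : B → ℕ) (g : A → B)
    (hg : ∀ a b, g (a * b) = g a * g b) (hw : ∀ a, w' (g a) = w a) (u v : List A) :
    mapDomain (List.map g) (tw k qc qs w u v) = tw k qc qs w' (u.map g) (v.map g) := by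
  have hwl : ∀ l : List A, wl w' (l.map g) = wl w l := fun l => by simp [wl, Function.comp_def, hw]
  have hcons : ∀ (x : A) (F : List A →₀ k), mapDomain (List.map g) (mapDomain (x :: ·) F)
      = mapDomain (g x :: ·) (mapDomain (List.map g) F) := fun x F => by
    rw [← mapDomain_comp, ← mapDomain_comp]; rfl
  induction u, v using tw.induct with
  | case1 u => simp [tw_nil_right]
  | case2 b v => simp [tw_nil_left]
  | case3 a u b v ih₁ ih₂ ih₃ =>
    rw [tw_cons_cons, List.map_cons, List.map_cons, tw_cons_cons]
    simp only [mapDomain_add, mapDomain_smul, hcons, ih₁, ih₂, ih₃, hg, hw, ← List.map_cons, hwl]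

end TwistedLaw

section TwistedLawAssoc

variable {A : Type*} [Mul A] {k : Type*} [CommRing k] {qc qs : k} {w : A → ℕ}

lemma twL_single_left (u : List A) (Y : List A →₀ k) :
    twL k qc qs w (single u 1) Y = Y.sum fun v c => c • tw k qc qs w u v := by
  rw [twL, lift_apply, sum_single_index (by simp), one_smul, lift_apply]

lemma twL_single_right (X : List A →₀ k) (v : List A) :
    twL k qc qs w X (single v 1) = X.sum fun u c => c • tw k qc qs w u v := by
  rw [twL, lift_apply, LinearMap.finsupp_sum_apply]
  refine sum_congr fun u _ => ?_
  rw [LinearMap.smul_apply, lift_apply, sum_single_index (by simp), one_smul]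

lemma twL_single_single (u v : List A) :
    twL k qc qs w (single u 1) (single v 1) = tw k qc qs w u v := by
  rw [twL_single_left, sum_single_index (by simp), one_smul]

lemma twL_mapDomain_cons_single_cons {x c : A} {F : List A →₀ k} {z : List A} {W : ℕ}
    (hF : ∀ t ∈ F.support, wl w t = W) :
    twL k qc qs w (mapDomain (x :: ·) F) (single (c :: z) 1)
      = mapDomain (x :: ·) (twL k qc qs w F (single (c :: z) 1))
        + qc ^ ((w x + W) * w c) •
            mapDomain (c :: ·) (twL k qc qs w (mapDomain (x :: ·) F) (single z 1))
        + (qc ^ (W * w c) * qs ^ (w x * w c)) •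
            mapDomain ((x * c) :: ·) (twL k qc qs w F (single z 1)) := by
  simp only [twL_single_right]
  rw [sum_mapDomain_index (fun _ => by simp) (fun _ _ _ => add_smul _ _ _),
    sum_mapDomain_index (fun _ => by simp) (fun _ _ _ => add_smul _ _ _)]
  simp only [mapDomain_sum, smul_sum, ← sum_add]
  refine sum_congr fun t ht => ?_
  rw [tw_cons_cons, wl, List.map_cons, List.sum_cons, ← wl, hF t ht]
  simp only [smul_add, mapDomain_smul, smul_comm _ (qc ^ _ : k), smul_comm _ (qc ^ _ * _ : k)]

lemma twL_single_cons_mapDomain_cons {a y : A} {u : List A} {G : List A →₀ k} :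
    twL k qc qs w (single (a :: u) 1) (mapDomain (y :: ·) G)
      = mapDomain (a :: ·) (twL k qc qs w (single u 1) (mapDomain (y :: ·) G))
        + qc ^ (wl w (a :: u) * w y) •
            mapDomain (y :: ·) (twL k qc qs w (single (a :: u) 1) G)
        + (qc ^ (wl w u * w y) * qs ^ (w a * w y)) •
            mapDomain ((a * y) :: ·) (twL k qc qs w (single u 1) G) := by
  simp only [twL_single_left]
  rw [sum_mapDomain_index (fun _ => by simp) (fun _ _ _ => add_smul _ _ _),
    sum_mapDomain_index (fun _ => by simp) (fun _ _ _ => add_smul _ _ _)]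
  simp only [mapDomain_sum, smul_sum, ← sum_add]
  refine sum_congr fun s _ => ?_
  rw [tw_cons_cons]
  simp only [smul_add, mapDomain_smul, smul_comm _ (qc ^ _ : k), smul_comm _ (qc ^ _ * _ : k)]

lemma twL_nil_left (Y : List A →₀ k) : twL k qc qs w (single [] 1) Y = Y := by
  conv_rhs => rw [← sum_single Y]
  rw [twL_single_left]
  exact sum_congr fun v _ => by rw [tw_nil_left, smul_single_one]

lemma twL_nil_right (X : List A →₀ k) : twL k qc qs w X (single [] 1) = X := by
  conv_rhs => rw [← sum_single X]
  rw [twL_single_right]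
  exact sum_congr fun u _ => by rw [tw_nil_right, smul_single_one]

lemma wl_of_mem_support_tw (hw : ∀ a b, w (a * b) = w a + w b) {u v t : List A}
    (ht : t ∈ (tw k qc qs w u v).support) : wl w t = wl w u + wl w v :=
  sum_map_of_mem_support_tw w hw ht

theorem tw_assoc (hassoc : ∀ a b c : A, a * b * c = a * (b * c))
    (hw : ∀ a b, w (a * b) = w a + w b) :
    ∀ u v z : List A, twL k qc qs w (tw k qc qs w u v) (single z 1)
      = twL k qc qs w (single u 1) (tw k qc qs w v z)
  | u, [], z => by rw [tw_nil_right, tw_nil_left]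
  | u, b :: v, [] => by rw [twL_nil_right, tw_nil_right, twL_single_single]
  | [], b :: v, c :: z => by rw [tw_nil_left, twL_nil_left, twL_single_single]
  | a :: u, b :: v, c :: z => by
    have IH₁ := tw_assoc hassoc hw u (b :: v) (c :: z)
    have IH₂ := tw_assoc hassoc hw (a :: u) (b :: v) z
    have IH₃ := tw_assoc hassoc hw u (b :: v) z
    have IH₄ := tw_assoc hassoc hw (a :: u) v (c :: z)
    have IH₅ := tw_assoc hassoc hw u v (c :: z)
    have IH₆ := tw_assoc hassoc hw (a :: u) v z
    have IH₇ := tw_assoc hassoc hw u v z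
    -- Expand both sides along the recursion until only these seven smaller instances remain;
    -- the scalars then agree because `w` is additive and the product is associative.
    rw [tw_cons_cons a b u v]
    simp only [map_add, map_smul, LinearMap.add_apply, LinearMap.smul_apply]
    rw [twL_mapDomain_cons_single_cons (fun t => wl_of_mem_support_tw hw),
      twL_mapDomain_cons_single_cons (fun t => wl_of_mem_support_tw hw),
      twL_mapDomain_cons_single_cons (fun t => wl_of_mem_support_tw hw),
      IH₁, IH₃, IH₄, IH₆, IH₅, IH₇, tw_cons_cons b c v z]
    simp only [map_add, map_smul, mapDomain_add, mapDomain_smul, smul_add]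
    rw [twL_single_cons_mapDomain_cons, twL_single_cons_mapDomain_cons,
      twL_single_cons_mapDomain_cons, ← IH₂, tw_cons_cons a b u v]
    simp only [map_add, map_smul, LinearMap.add_apply, LinearMap.smul_apply, mapDomain_add,
      mapDomain_smul, smul_add, wl, List.map_cons, List.sum_cons, hw, hassoc]
    match_scalars <;> ring
termination_by u v z => u.length + v.length + z.length

end TwistedLawAssoc

section DeformedShiftedLaw

open Mon

variable {k : Type*} [CommRing k] {qc qs : k}

lemma twbarL_single_left (u : List Mon) (Y : FreeL k) :
    twbarL k qc qs (single u 1) Y = Y.sum fun v c => c • twbar k qc qs u v := by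
  rw [twbarL, lift_apply, sum_single_index (by simp), one_smul, lift_apply]

lemma twbarL_single_right (X : FreeL k) (v : List Mon) :
    twbarL k qc qs X (single v 1) = X.sum fun u c => c • twbar k qc qs u v := by
  rw [twbarL, lift_apply, LinearMap.finsupp_sum_apply]
  refine sum_congr fun u _ => ?_
  rw [LinearMap.smul_apply, lift_apply, sum_single_index (by simp), one_smul]

lemma twbarL_single_single (u v : List Mon) :
    twbarL k qc qs (single u 1) (single v 1) = twbar k qc qs u v := by
  rw [twbarL_single_left, sum_single_index (by simp), one_smul]

lemma twbarL_nil_left (Y : FreeL k) : twbarL k qc qs (single [] 1) Y = Y := by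
  conv_rhs => rw [← sum_single Y]
  rw [twbarL_single_left]
  refine sum_congr fun v _ => ?_
  rw [twbar, maxInd_nil, Tmon_zero, List.map_id, tw_nil_left, smul_single_one]

lemma twbarL_nil_right (X : FreeL k) : twbarL k qc qs X (single [] 1) = X := by
  conv_rhs => rw [← sum_single X]
  rw [twbarL_single_right]
  exact sum_congr fun u _ => by rw [twbar, List.map_nil, tw_nil_right, smul_single_one]

lemma totalDeg_of_mem_support_tw {w : Mon → ℕ} {u v t : List Mon}
    (ht : t ∈ (tw k qc qs w u v).support) :
    totalDeg t = totalDeg u + totalDeg v :=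
  sum_map_of_mem_support_tw (fun m : Mon => m.1) (fun _ _ => rfl) ht

lemma totalDeg_of_mem_support_twbar {u v t : List Mon} (ht : t ∈ (twbar k qc qs u v).support) :
    totalDeg t = totalDeg (sconc u v) := by
  rw [totalDeg_sconc, ← totalDeg_map_Tmon]
  exact totalDeg_of_mem_support_tw ht

lemma twbar_assoc (u v z : List Mon) :
    twbarL k qc qs (twbar k qc qs u v) (single z 1)
      = twbarL k qc qs (single u 1) (twbar k qc qs v z) := by
  have hshift : (z.map (Tmon (maxInd v))).map (Tmon (maxInd u))
      = z.map (Tmon (maxInd u + maxInd v)) := by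
    simp only [List.map_map, Function.comp_def, Tmon_Tmon]
  calc twbarL k qc qs (twbar k qc qs u v) (single z 1)
      = twL k qc qs Mon.w (tw k qc qs Mon.w u (v.map (Tmon (maxInd u))))
          (single (z.map (Tmon (maxInd u + maxInd v))) 1) := by
        rw [twbarL_single_right, twL_single_right]
        refine sum_congr fun t ht => ?_
        have hmax : maxInd t = maxInd u + maxInd v := by
          rw [maxInd_eq_sup_support, totalDeg_of_mem_support_twbar ht, ← maxInd_eq_sup_support,
            maxInd_sconc]
        rw [show twbar k qc qs t z = tw k qc qs Mon.w t (z.map (Tmon (maxInd t))) from rfl, hmax]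
    _ = twL k qc qs Mon.w (single u 1)
          (mapDomain (List.map (Tmon (maxInd u))) (twbar k qc qs v z)) := by
        rw [tw_assoc Mon.mul_assoc Mon.w_mul, twbar,
          mapDomain_map_tw Mon.w _ (Tmon_mul _) (w_Tmon _), hshift]
    _ = twbarL k qc qs (single u 1) (twbar k qc qs v z) := by
        rw [twL_single_left, twbarL_single_left,
          sum_mapDomain_index (fun _ => by simp) (fun _ _ _ => add_smul _ _ _)]
        rfl

theorem twbarL_assoc (x y z : FreeL k) :
    twbarL k qc qs (twbarL k qc qs x y) z = twbarL k qc qs x (twbarL k qc qs y z) :=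
  bilinear_assoc_of_single _ (fun u v z => by
    rw [twbarL_single_single, twbarL_single_single, twbar_assoc]) x y z

end DeformedShiftedLaw

namespace Mon

/-- `posWeight C l = ∑ⱼ (j + 1) κ(lⱼ)` where `κ(m) = ∑ᵢ m(i) Cⁱ`. Once `C` exceeds the degree
of the letters involved, a letter using a larger index outweighs all letters using smaller
ones, so moving it to an earlier position, or merging it into an earlier letter, lowers
`posWeight`. -/
noncomputable def posWeight (C : ℕ) : List Mon → ℕ
  | [] => 0
  | m :: l => weight (C ^ ·) (totalDeg (m :: l)) + posWeight C l

@[simp] lemma posWeight_nil (C : ℕ) : posWeight C [] = 0 := rfl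

@[simp] lemma posWeight_cons (C : ℕ) (m : Mon) (l : List Mon) :
    posWeight C (m :: l) = weight (C ^ ·) m.1 + weight (C ^ ·) (totalDeg l) + posWeight C l := by
  rw [posWeight, totalDeg_cons, map_add]

lemma posWeight_append (C : ℕ) (s t : List Mon) :
    posWeight C (s ++ t)
      = posWeight C s + s.length * weight (C ^ ·) (totalDeg t) + posWeight C t := by
  induction s with
  | nil => simp
  | cons m s ih =>
    simp only [List.cons_append, posWeight_cons, totalDeg_append, map_add, ih, List.length_cons]
    ring

lemma weight_pow_embDomain (C p : ℕ) (d : ℕ →₀ ℕ) :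
    weight (C ^ ·) (d.embDomain (addEmb p)) = C ^ p * weight (C ^ ·) d := by
  rw [weight_apply, weight_apply, sum_embDomain, mul_sum]
  exact sum_congr fun i _ => by simp [pow_add]; ring

lemma posWeight_map_Tmon (C p : ℕ) (l : List Mon) :
    posWeight C (l.map (Tmon p)) = C ^ p * posWeight C l := by
  induction l with
  | nil => simp
  | cons m l ih =>
    simp only [List.map_cons, posWeight_cons, ih, totalDeg_map_Tmon, val_Tmon,
      weight_pow_embDomain]
    ring

lemma posWeight_sconc (C : ℕ) (u v : List Mon) :
    posWeight C (sconc u v) = posWeight C u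
      + u.length * (C ^ maxInd u * weight (C ^ ·) (totalDeg v)) + C ^ maxInd u * posWeight C v := by
  rw [sconc, posWeight_append, posWeight_map_Tmon, totalDeg_map_Tmon, weight_pow_embDomain]

lemma weight_pow_le {C n : ℕ} (hC : 0 < C) {d : ℕ →₀ ℕ} (hd : ∀ i ∈ d.support, i ≤ n) :
    weight (C ^ ·) d ≤ C ^ n * degree d := by
  rw [weight_apply, degree_apply, Finset.mul_sum]
  refine Finset.sum_le_sum fun i hi => ?_
  dsimp only
  rw [smul_eq_mul, mul_comm (d i)]
  exact Nat.mul_le_mul_right _ (Nat.pow_le_pow_right hC (hd i hi))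

lemma weight_totalDeg_lt {C n : ℕ} {l : List Mon} (hC : degree (totalDeg l) < C)
    (hl : ∀ i ∈ IndAlph l, i ≤ n) : weight (C ^ ·) (totalDeg l) < C ^ (n + 1) := by
  have hC0 : 0 < C := by omega
  refine (weight_pow_le hC0 fun i hi => hl i ?_).trans_lt ?_
  · rwa [IndAlph_eq_support_totalDeg]
  · rw [pow_succ]; exact Nat.mul_lt_mul_of_pos_left hC (pow_pos hC0 n)

lemma pow_succ_le_weight_pow {C n : ℕ} (hC : 0 < C) {d : ℕ →₀ ℕ} (hd0 : d ≠ 0)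
    (hd : ∀ i ∈ d.support, n < i) : C ^ (n + 1) ≤ weight (C ^ ·) d := by
  obtain ⟨i, hi⟩ := support_nonempty_iff.mpr hd0
  calc C ^ (n + 1) ≤ C ^ i := Nat.pow_le_pow_right hC (hd i hi)
    _ ≤ weight (C ^ ·) d := le_weight_of_ne_zero' (C ^ ·) (mem_support_iff.mp hi)

end Mon

section Triangularity

open Mon

variable {k : Type*} [CommRing k] {qc qs : k}

theorem tw_apply_append {w : Mon → ℕ} {n : ℕ} {u v : List Mon} (hu : ∀ i ∈ IndAlph u, i ≤ n)
    (hv : ∀ j ∈ IndAlph v, n < j) : tw k qc qs w u v (u ++ v) = 1 := by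
  induction u, v using tw.induct with
  | case1 u => simp [tw_nil_right]
  | case2 b v => simp [tw_nil_left]
  | case3 a u b v ih₁ _ _ =>
    have hab : a ≠ b := by
      rintro rfl
      obtain ⟨i, hi⟩ := support_nonempty_iff.mpr a.2.1
      exact absurd (hu i (Finset.mem_union_left _ hi)) (hv i (Finset.mem_union_left _ hi)).not_ge
    have habm : a * b ≠ a := fun h =>
      b.2.1 (add_eq_left.mp (congrArg Subtype.val h : a.1 + b.1 = a.1))
    rw [tw_cons_cons, Finsupp.add_apply, Finsupp.add_apply, Finsupp.smul_apply,
      Finsupp.smul_apply, List.cons_append,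
      mapDomain_apply List.cons_injective,
      ih₁ (fun i hi => hu i (Finset.mem_union_right _ hi)) hv,
      mapDomain_of_notMem_range _ _ (by rintro ⟨t, ht⟩; exact hab (List.cons_eq_cons.mp ht).1.symm),
      mapDomain_of_notMem_range _ _ (by rintro ⟨t, ht⟩; exact habm (List.cons_eq_cons.mp ht).1)]
    simp

theorem posWeight_lt_of_mem_support_tw {w : Mon → ℕ} {C n : ℕ} {u v z : List Mon}
    (hC : degree (totalDeg u) < C) (hu : ∀ i ∈ IndAlph u, i ≤ n) (hv : ∀ j ∈ IndAlph v, n < j)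
    (hz : z ∈ (tw k qc qs w u v).support) (hne : z ≠ u ++ v) :
    posWeight C z < posWeight C (u ++ v) := by
  induction u, v using tw.induct generalizing z with
  | case1 u =>
    rw [tw_nil_right] at hz
    exact absurd (by simpa using Finset.mem_singleton.mp (support_single_subset hz)) hne
  | case2 b v =>
    rw [tw_nil_left] at hz
    exact absurd (Finset.mem_singleton.mp (support_single_subset hz)) hne
  | case3 a u b v ih₁ ih₂ ih₃ =>
    have hC0 : 0 < C := by omega
    have hu' : ∀ i ∈ IndAlph u, i ≤ n := fun i hi => hu i (Finset.mem_union_right _ hi)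
    have hv' : ∀ j ∈ IndAlph v, n < j := fun j hj => hv j (Finset.mem_union_right _ hj)
    have hCu : degree (totalDeg u) < C :=
      lt_of_le_of_lt (by simp only [totalDeg_cons, map_add]; exact Nat.le_add_left _ _) hC
    have hb : C ^ (n + 1) ≤ weight (C ^ ·) b.1 :=
      pow_succ_le_weight_pow hC0 b.2.1 fun j hj => hv j (Finset.mem_union_left _ hj)
    have hau := weight_totalDeg_lt hC hu
    simp only [totalDeg_cons, map_add] at hau
    have hlen : weight (C ^ ·) b.1 ≤ (u.length + 1) * weight (C ^ ·) b.1 :=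
      Nat.le_mul_of_pos_left _ (Nat.succ_pos _)
    rcases mem_support_tw_cons_cons hz with ⟨t, ht, rfl⟩ | ⟨t, ht, rfl⟩ | ⟨t, ht, rfl⟩
    · have hlt := ih₁ hCu hu' hv ht fun h => hne (by rw [h, List.cons_append])
      have hdeg := totalDeg_of_mem_support_tw ht
      simp only [List.cons_append, posWeight_cons, hdeg, totalDeg_append]
      omega
    · have hle : posWeight C t ≤ posWeight C (a :: u ++ v) := by
        rcases eq_or_ne t (a :: u ++ v) with rfl | h
        exacts [le_rfl, (ih₂ hC hu hv' ht h).le]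
      have hdeg := totalDeg_of_mem_support_tw ht
      simp only [List.cons_append, posWeight_cons, posWeight_append, hdeg, totalDeg_cons,
        totalDeg_append, map_add] at hle ⊢
      nlinarith
    · have hle : posWeight C t ≤ posWeight C (u ++ v) := by
        rcases eq_or_ne t (u ++ v) with rfl | h
        exacts [le_rfl, (ih₃ hCu hu' hv' ht h).le]
      have hdeg := totalDeg_of_mem_support_tw ht
      simp only [List.cons_append, posWeight_cons, posWeight_append, hdeg, totalDeg_cons,
        totalDeg_append, map_add, val_mul] at hle ⊢
      nlinarith

end Triangularity

section Factorization

open Mon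

variable {k : Type*} [CommRing k] {qc qs : k}

theorem hasLeadingTerm_twbar {C : ℕ} {u : List Mon} (hC : degree (totalDeg u) < C)
    (v : List Mon) : HasLeadingTerm (posWeight C) (twbar k qc qs u v) (sconc u v) := by
  have hu : ∀ i ∈ IndAlph u, i ≤ maxInd u := fun i hi => Finset.le_sup (f := id) hi
  have hv : ∀ j ∈ IndAlph (v.map (Tmon (maxInd u))), maxInd u < j := by
    intro j hj
    obtain ⟨i, hi, rfl⟩ := Finset.mem_map.mp (IndAlph_map_Tmon _ v ▸ hj)
    have := pos_of_mem_support_totalDeg (IndAlph_eq_support_totalDeg v ▸ hi)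
    rw [addEmb_apply]
    omega
  exact ⟨tw_apply_append hu hv, fun z hz hne => posWeight_lt_of_mem_support_tw hC hu hv hz hne⟩

noncomputable def twbarProd (k : Type*) [CommRing k] (qc qs : k) (fs : List (List Mon)) :
    FreeL k :=
  (fs.map fun x => single x 1).foldr (fun a b => twbarL k qc qs a b) (single [] 1)

lemma twbarProd_cons (f : List Mon) (fs : List (List Mon)) :
    twbarProd k qc qs (f :: fs) = twbarL k qc qs (single f 1) (twbarProd k qc qs fs) := rfl

lemma twbarProd_append (fs gs : List (List Mon)) :
    twbarProd k qc qs (fs ++ gs)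
      = twbarL k qc qs (twbarProd k qc qs fs) (twbarProd k qc qs gs) := by
  induction fs with
  | nil => exact (twbarL_nil_left _).symm
  | cons f fs ih => rw [List.cons_append, twbarProd_cons, ih, twbarProd_cons, twbarL_assoc]

lemma totalDeg_of_mem_support_twbarProd {fs : List (List Mon)} {z : List Mon}
    (hz : z ∈ (twbarProd k qc qs fs).support) : totalDeg z = totalDeg (fs.foldr sconc []) := by
  induction fs generalizing z with
  | nil => rw [Finset.mem_singleton.mp (support_single_subset hz)]; rfl
  | cons f fs ih =>
    classical
    rw [twbarProd_cons, twbarL_single_left] at hz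
    obtain ⟨t, ht, hzt⟩ := Finset.mem_biUnion.mp (support_sum hz)
    rw [totalDeg_of_mem_support_twbar (support_smul hzt), List.foldr_cons, totalDeg_sconc,
      totalDeg_sconc, ih ht]

theorem hasLeadingTerm_twbarProd {C : ℕ} (fs : List (List Mon))
    (hC : degree (totalDeg (fs.foldr sconc [])) < C) :
    HasLeadingTerm (posWeight C) (twbarProd k qc qs fs) (fs.foldr sconc []) := by
  induction fs with
  | nil =>
    exact ⟨single_eq_same, fun z hz hne =>
      absurd (Finset.mem_singleton.mp (support_single_subset hz)) hne⟩
  | cons f fs ih =>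
    rw [List.foldr_cons, degree_totalDeg_sconc] at hC
    have hf : degree (totalDeg f) < C := by omega
    have ih := ih (by omega)
    rw [twbarProd_cons, twbarL_single_left, List.foldr_cons]
    refine hasLeadingTerm_sum_smul ih.1 (hasLeadingTerm_twbar hf _) fun z hz hne y hy => ?_
    calc posWeight C y ≤ posWeight C (sconc f z) := (hasLeadingTerm_twbar hf z).le hy
      _ < posWeight C (sconc f (fs.foldr sconc [])) := by
        have hlt := ih.2 z hz hne
        have hpos : 0 < C ^ maxInd f := pow_pos (by omega) _
        rw [posWeight_sconc, posWeight_sconc, totalDeg_of_mem_support_twbarProd hz]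
        gcongr

noncomputable def lexWeight (l : List Mon) : ℕ ×ₗ ℕ :=
  toLex (degree (totalDeg l), posWeight (degree (totalDeg l) + 1) l)

theorem hasLeadingTerm_lexWeight_twbarProd (fs : List (List Mon)) :
    HasLeadingTerm lexWeight (twbarProd k qc qs fs) (fs.foldr sconc []) := by
  obtain ⟨hcoeff, hlt⟩ := hasLeadingTerm_twbarProd (k := k) (qc := qc) (qs := qs)
    (C := degree (totalDeg (fs.foldr sconc [])) + 1) fs (Nat.lt_succ_self _)
  refine ⟨hcoeff, fun z hz hne => ?_⟩
  simp only [lexWeight, totalDeg_of_mem_support_twbarProd hz]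
  exact Prod.Lex.toLex_lt_toLex.mpr (Or.inr ⟨rfl, hlt z hz hne⟩)

end Factorization

/-- ** Statement 18 **: let `B` send the empty list to itself and a nonempty compact list
`l` with (unique) factorization `l = l₁ ∗̄ ⋯ ∗̄ l_r` into `∗̄`-irreducibles to
`l₁ ↑̄ ⋯ ↑̄ l_r`.  Then (α) the family `(B l)`, indexed by compact lists, is a `k`-basis of
the span of the compact lists, and (β) `B (l ∗̄ l') = B l ↑̄ B l'` for compact `l, l'`. -/
theorem B_basis_and_multiplicative (k : Type*) [CommRing k] (qc qs : k)
    (B : List Mon → FreeL k)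
    (hB0 : B [] = Finsupp.single [] 1)
    (hB : ∀ (l : List Mon) (fs : List (List Mon)), Mon.Compact l → l ≠ [] →
        (∀ x ∈ fs, Mon.SIrred x) → fs.foldr Mon.sconc [] = l →
        B l = (fs.map fun x => Finsupp.single x (1 : k)).foldr
            (fun a b => twbarL k qc qs a b) (Finsupp.single [] 1)) :
    (LinearIndependent k fun l : {l : List Mon // Mon.Compact l} => B l.1) ∧
    Submodule.span k (Set.range fun l : {l : List Mon // Mon.Compact l} => B l.1)
      = CompSpan k ∧
    ∀ l l' : List Mon, Mon.Compact l → Mon.Compact l' →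
      B (Mon.sconc l l') = twbarL k qc qs (B l) (B l') := by
  have hfact : ∀ l, Mon.Compact l → ∃ fs : List (List Mon),
      (∀ x ∈ fs, Mon.SIrred x) ∧ fs.foldr Mon.sconc [] = l ∧ B l = twbarProd k qc qs fs := by
    intro l hl
    rcases eq_or_ne l [] with rfl | hne
    · exact ⟨[], by simp, rfl, hB0⟩
    · obtain ⟨fs, hirr, hfold⟩ := Mon.exists_sIrred_factorization l hne
      exact ⟨fs, hirr, hfold, hB l fs hl hne hirr hfold⟩
  have hlead : ∀ l : {l // Mon.Compact l}, HasLeadingTerm lexWeight (B l.1) l.1 := by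
    rintro ⟨l, hl⟩
    obtain ⟨fs, -, rfl, hBl⟩ := hfact l hl
    exact hBl ▸ hasLeadingTerm_lexWeight_twbarProd fs
  have hsupp : ∀ l : {l // Mon.Compact l}, ∀ z ∈ (B l.1).support, Mon.Compact z := by
    rintro ⟨l, hl⟩ z hz
    obtain ⟨fs, -, rfl, hBl⟩ := hfact l hl
    exact hl.of_totalDeg_eq (totalDeg_of_mem_support_twbarProd (hBl ▸ hz))
  refine ⟨linearIndependent_of_hasLeadingTerm Subtype.val_injective hlead,
    span_eq_of_hasLeadingTerm hlead hsupp, fun l l' hl hl' => ?_⟩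
  rcases eq_or_ne l [] with rfl | hne
  · rw [Mon.sconc_nil_left, hB0, twbarL_nil_left]
  rcases eq_or_ne l' [] with rfl | -
  · rw [Mon.sconc_nil_right, hB0, twbarL_nil_right]
  obtain ⟨fs, hfs, hfold, hBl⟩ := hfact l hl
  obtain ⟨fs', hfs', hfold', hBl'⟩ := hfact l' hl'
  rw [hB _ (fs ++ fs') (hl.sconc hl') (by simp [Mon.sconc, hne])
    (by simpa [or_imp, forall_and] using ⟨hfs, hfs'⟩)
    (by rw [Mon.foldr_sconc_append, hfold, hfold']), hBl, hBl']
  exact twbarProd_append fs fs'
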